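/- arXiv:1004.1876 — 2 statements merged into one kernel-verified Lean document; each statement's English description precedes it below -/
import Mathlib

section
/- Let F ⊆ {-1,1}^m be nonempty with indicator function f having coefficients b_a. F is a subset of some proper regular fraction (i.e., there exist a ≠ 0 in {0,1}^m and c ∈ {-1,1} with x^a = c for all x ∈ F) if and only if there exists a ≠ 0 with |b_a| = b₀. -/
open MvPolynomial

lemma cube_sum (m : ℕ) (f : MvPolynomial (Fin m) ℚ) (hml : ∀ d ∈ f.support, ∀ i, d i ≤ 1)
    (a : Fin m →₀ ℕ) (ha : ∀ i, a i ≤ 1) :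
    ∑ x ∈ Fintype.piFinset (fun _ : Fin m => ({1, -1} : Finset ℚ)),
      eval x f * ∏ i, x i ^ a i = 2 ^ m * f.coeff a := by
  conv_lhs => rw [f.as_sum]
  have hstep : ∀ x : Fin m → ℚ,
      eval x (∑ v ∈ f.support, monomial v (f.coeff v)) * ∏ i, x i ^ a i
      = ∑ v ∈ f.support, f.coeff v * ∏ i, x i ^ (v i + a i) := by
    intro x
    rw [map_sum, Finset.sum_mul]
    refine Finset.sum_congr rfl fun v hv => ?_
    rw [eval_monomial, Finsupp.prod_pow, mul_assoc, ← Finset.prod_mul_distrib]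
    simp [pow_add]
  simp only [hstep]
  rw [Finset.sum_comm]
  have hinner : ∀ v ∈ f.support,
      (∑ x ∈ Fintype.piFinset (fun _ : Fin m => ({1, -1} : Finset ℚ)),
        f.coeff v * ∏ i, x i ^ (v i + a i))
      = f.coeff v * ∏ i : Fin m, ((1:ℚ) ^ (v i + a i) + (-1:ℚ) ^ (v i + a i)) := by
    intro v hv
    rw [← Finset.mul_sum,
      ← Finset.prod_univ_sum (fun _ : Fin m => ({1, -1} : Finset ℚ))
        (fun i t => t ^ (v i + a i))]
    congr 1
    refine Finset.prod_congr rfl fun i _ => ?_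
    rw [Finset.sum_pair (by norm_num : (1:ℚ) ≠ -1)]
  rw [Finset.sum_congr rfl hinner]
  have hprod : ∀ v ∈ f.support,
      (∏ i : Fin m, ((1:ℚ) ^ (v i + a i) + (-1:ℚ) ^ (v i + a i)))
      = if v = a then 2 ^ m else 0 := by
    intro v hv
    by_cases hva : v = a
    · subst hva
      simp only [if_pos rfl]
      have h2 : ∀ i : Fin m, (1:ℚ) ^ (v i + v i) + (-1:ℚ) ^ (v i + v i) = 2 := by
        intro i
        rw [one_pow, Even.neg_one_pow ⟨v i, rfl⟩]
        norm_num
      rw [Finset.prod_congr rfl (fun i _ => h2 i), Finset.prod_const, Finset.card_univ,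
        Fintype.card_fin]
      simp
    · rw [if_neg hva]
      obtain ⟨i, hi⟩ : ∃ i, v i ≠ a i := by
        by_contra h
        push_neg at h
        exact hva (Finsupp.ext h)
      apply Finset.prod_eq_zero (Finset.mem_univ i)
      have h1 := hml v hv i
      have h2 := ha i
      interval_cases h : v i <;> interval_cases h' : a i <;> simp_all
  rw [Finset.sum_congr rfl (fun v hv => by rw [hprod v hv])]
  rw [Finset.sum_eq_single a (fun b _ hb => by rw [if_neg hb, mul_zero])
    (fun h => by rw [MvPolynomial.notMem_support_iff.mp h, zero_mul])]
  rw [if_pos rfl]; ring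

/-- A nonempty design `F ⊆ {-1,1}^m` is contained in a proper regular fraction (i.e., some
nontrivial word `x^a` is constant `= c ∈ {±1}` on `F`) iff some non-constant coefficient of its
indicator function satisfies `|b_a| = b₀`. -/
theorem subset_regular_iff_coeff (m : ℕ) (F : Finset (Fin m → ℚ)) (hne : F.Nonempty)
    (hF : ∀ x ∈ F, ∀ i, x i = 1 ∨ x i = -1)
    (f : MvPolynomial (Fin m) ℚ)
    (hml : ∀ d ∈ f.support, ∀ i, d i ≤ 1)
    (h1 : ∀ x ∈ F, MvPolynomial.eval x f = 1)
    (h0 : ∀ x : Fin m → ℚ, (∀ i, x i = 1 ∨ x i = -1) → x ∉ F → MvPolynomial.eval x f = 0) :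
    (∃ a : Fin m →₀ ℕ, (∀ i, a i ≤ 1) ∧ a ≠ 0 ∧
        ∃ c : ℚ, (c = 1 ∨ c = -1) ∧ ∀ x ∈ F, (∏ i, x i ^ a i) = c) ↔
      ∃ a : Fin m →₀ ℕ, (∀ i, a i ≤ 1) ∧ a ≠ 0 ∧ |f.coeff a| = f.coeff 0 := by
  set C : Finset (Fin m → ℚ) := Fintype.piFinset (fun _ : Fin m => ({1, -1} : Finset ℚ)) with hC
  have hFC : F ⊆ C := by
    intro x hx
    rw [hC, Fintype.mem_piFinset]
    intro i
    rcases hF x hx i with h | h <;> simp [h]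
  -- the design sum formula
  have hds : ∀ a : Fin m →₀ ℕ, (∀ i, a i ≤ 1) →
      (2:ℚ) ^ m * f.coeff a = ∑ x ∈ F, ∏ i, x i ^ a i := by
    intro a ha
    rw [← cube_sum m f hml a ha]
    rw [← Finset.sum_subset hFC (fun x hxC hxF => by
      rw [h0 x (fun i => by
        have := Fintype.mem_piFinset.mp hxC i
        simpa using this) hxF, zero_mul])]
    exact Finset.sum_congr rfl fun x hx => by rw [h1 x hx, one_mul]
  have hb0 : (2:ℚ) ^ m * f.coeff 0 = F.card := by
    rw [hds 0 (fun i => by simp)]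
    simp
  have habs : ∀ x ∈ F, ∀ a : Fin m →₀ ℕ, |∏ i, x i ^ a i| = 1 := by
    intro x hx a
    rw [Finset.abs_prod]
    refine Finset.prod_eq_one fun i _ => ?_
    rw [abs_pow]
    rcases hF x hx i with h | h <;> simp [h]
  constructor
  · rintro ⟨a, ha, hane, c, hc, hconst⟩
    refine ⟨a, ha, hane, ?_⟩
    have h2 : (2:ℚ) ^ m * f.coeff a = F.card * c := by
      rw [hds a ha, Finset.sum_congr rfl hconst, Finset.sum_const, nsmul_eq_mul]
    have hpos : (0:ℚ) < 2 ^ m := by positivity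
    have : (2:ℚ) ^ m * |f.coeff a| = 2 ^ m * f.coeff 0 := by
      rw [hb0, ← abs_of_pos hpos, ← abs_mul, h2, abs_mul]
      rcases hc with h | h <;> simp [h]
    exact mul_left_cancel₀ (ne_of_gt hpos) this
  · rintro ⟨a, ha, hane, heq⟩
    refine ⟨a, ha, hane, ?_⟩
    have hpos : (0:ℚ) < 2 ^ m := by positivity
    have hsum : |∑ x ∈ F, ∏ i, x i ^ a i| = F.card := by
      rw [← hds a ha, abs_mul, abs_of_pos hpos, heq, hb0]
    rcases abs_eq (by positivity : (0:ℚ) ≤ F.card) |>.mp hsum with hs | hs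
    · refine ⟨1, Or.inl rfl, fun x hx => ?_⟩
      have hz : ∑ x ∈ F, (1 - ∏ i, x i ^ a i) = 0 := by
        rw [Finset.sum_sub_distrib, hs, Finset.sum_const, nsmul_eq_mul, mul_one, sub_self]
      have hnn : ∀ x ∈ F, (0:ℚ) ≤ 1 - ∏ i, x i ^ a i := fun x hx => by
        have := habs x hx a
        have h' : ∏ i, x i ^ a i ≤ 1 := le_of_abs_le (le_of_eq this)
        linarith
      have := (Finset.sum_eq_zero_iff_of_nonneg hnn).mp hz x hx
      linarith
    · refine ⟨-1, Or.inr rfl, fun x hx => ?_⟩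
      have hz : ∑ x ∈ F, ((∏ i, x i ^ a i) + 1) = 0 := by
        rw [Finset.sum_add_distrib, hs, Finset.sum_const, nsmul_eq_mul, mul_one]
        ring
      have hnn : ∀ x ∈ F, (0:ℚ) ≤ (∏ i, x i ^ a i) + 1 := fun x hx => by
        have := habs x hx a
        have h' : -1 ≤ ∏ i, x i ^ a i := neg_le_of_abs_le (le_of_eq this)
        linarith
      have := (Finset.sum_eq_zero_iff_of_nonneg hnn).mp hz x hx
      linarith
end

section
/- If f is the indicator function of F ⊆ {-1,1}^m, then the vanishing ideal of F satisfies I(F) = ⟨x₁²-1, ..., x_m²-1, f - 1⟩. -/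
/-! By the combinatorial Nullstellensatz, the vanishing ideal of the cube `{±1}^m` is generated
by the `X i ^ 2 - 1`. If `g` vanishes on `F`, then `g * f` vanishes on the whole cube, and
`g = g * f - g * (f - 1)`. -/

open MvPolynomial

namespace MvPolynomial

variable {σ K : Type*} [Field K]

theorem vanishingIdeal_pi_finset_eq_span [Finite σ] (S : σ → Finset K)
    (hS : ∀ i, (S i).Nonempty) :
    vanishingIdeal K {x : σ → K | ∀ i, x i ∈ S i} =
      Ideal.span (Set.range fun i => ∏ r ∈ S i, (X i - C r)) := by
  refine le_antisymm (fun f hf => ?_) (Ideal.span_le.mpr ?_)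
  · obtain ⟨h, -, rfl⟩ := combinatorial_nullstellensatz_exists_linearCombination S hS f
      fun x hx => by simpa using hf x hx
    exact (Finsupp.range_linearCombination _).le (LinearMap.mem_range_self _ h)
  · rintro _ ⟨i, rfl⟩ x hx
    simp [Finset.prod_eq_zero (hx i) (sub_self (x i))]

theorem vanishingIdeal_cube_eq_span [Finite σ] (hK : ringChar K ≠ 2) :
    vanishingIdeal K {x : σ → K | ∀ i, x i = 1 ∨ x i = -1} =
      Ideal.span (Set.range fun i => (X i : MvPolynomial σ K) ^ 2 - 1) := by
  classical
  have hne : (1 : K) ≠ -1 := (Ring.neg_one_ne_one_of_char_ne_two hK).symm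
  convert vanishingIdeal_pi_finset_eq_span (K := K) (σ := σ) (fun _ => {1, -1})
    (fun _ => Finset.insert_nonempty _ _) using 3
  · simp
  · funext i
    rw [Finset.prod_pair hne, map_neg, C_1]
    ring

theorem vanishingIdeal_eq_sup_span_sub_one {k : Type*} [Field k] [Algebra k K]
    {C F : Set (σ → K)} (hFC : F ⊆ C) {f : MvPolynomial σ k}
    (h1 : ∀ x ∈ F, aeval x f = 1) (h0 : ∀ x ∈ C \ F, aeval x f = 0) :
    vanishingIdeal k F = vanishingIdeal k C ⊔ Ideal.span {f - 1} := by
  refine le_antisymm (fun g hg => ?_) (sup_le (vanishingIdeal_anti_mono hFC) ?_)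
  · have hgf : g * f ∈ vanishingIdeal k C := fun x hx => by
      by_cases hxF : x ∈ F
      · simp [hg x hxF]
      · simp [h0 x ⟨hx, hxF⟩]
    have hgf1 : g * (f - 1) ∈ Ideal.span {f - 1} :=
      Ideal.mul_mem_left _ _ (Ideal.mem_span_singleton_self _)
    simpa [mul_sub] using Ideal.sub_mem _ (Ideal.mem_sup_left hgf) (Ideal.mem_sup_right hgf1)
  · rw [Ideal.span_singleton_le_iff_mem]
    intro x hx
    simp [h1 x hx]

end MvPolynomial

theorem vanishingIdeal_eq_span_indicator_general (m : ℕ) (F : Set (Fin m → ℚ))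
    (hF : F ⊆ {x | ∀ i, x i = 1 ∨ x i = -1})
    (f : MvPolynomial (Fin m) ℚ)
    (h1 : ∀ x ∈ F, MvPolynomial.eval x f = 1)
    (h0 : ∀ x ∈ {x : Fin m → ℚ | ∀ i, x i = 1 ∨ x i = -1} \ F, MvPolynomial.eval x f = 0) :
    MvPolynomial.vanishingIdeal ℚ F =
      Ideal.span ((Set.range fun i : Fin m => (X i : MvPolynomial (Fin m) ℚ) ^ 2 - 1) ∪ {f - 1}) := by
  rw [Ideal.span_union, ← vanishingIdeal_cube_eq_span (by simp [ringChar.eq_zero])]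
  exact vanishingIdeal_eq_sup_span_sub_one hF (by simpa using h1) (by simpa using h0)

/-- If `f` is the indicator function of `F ⊆ {-1,1}^m`, then the design ideal is
`I(F) = ⟨x₁²-1, …, x_m²-1, f-1⟩`. -/
theorem vanishingIdeal_eq_span_indicator (m : ℕ) (F : Set (Fin m → ℚ))
    (hF : F ⊆ {x | ∀ i, x i = 1 ∨ x i = -1})
    (f : MvPolynomial (Fin m) ℚ)
    (hml : ∀ d ∈ f.support, ∀ i, d i ≤ 1)
    (h1 : ∀ x ∈ F, MvPolynomial.eval x f = 1)
    (h0 : ∀ x ∈ {x : Fin m → ℚ | ∀ i, x i = 1 ∨ x i = -1} \ F, MvPolynomial.eval x f = 0) :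
    MvPolynomial.vanishingIdeal ℚ F =
      Ideal.span ((Set.range fun i : Fin m => (X i : MvPolynomial (Fin m) ℚ) ^ 2 - 1) ∪ {f - 1}) :=
  vanishingIdeal_eq_span_indicator_general m F hF f h1 h0
end
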